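/- arXiv:2504.01077 — 2 statements merged into one kernel-verified Lean document; each statement's English description precedes it below -/
import Mathlib

section
/- Let H be an n×n Hermitian complex matrix, ψ ∈ ℂ^n a unit vector, Ψ = ψψ†, and assume the energy variance V_Ψ = ⟨ψ, H²ψ⟩ − ⟨ψ, Hψ⟩² is strictly positive. Then for every real s, the matrix exponential of the commutator satisfies exp(s[Ψ,H]) = I + A(s)·[Ψ,H] + B(s)·([Ψ,H])², where A(s) = sin(s√V_Ψ)/√V_Ψ and B(s) = (1 − cos(s√V_Ψ))/V_Ψ. -/
/-!
Write `K = [Ψ, H]`. Because `Ψ` is a rank-one projection, `Ψ H Ψ = E_Ψ Ψ` and `Ψ H² Ψ = ⟨ψ, H²ψ⟩ Ψ`,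
and expanding `K³` with these relations collapses it to `K³ = -V_Ψ K`. With `ω = √V_Ψ` the powers
of `K` are then `K^(2k+1) = (-ω²)^k K` and `K^(2k+2) = (-ω²)^k K²`, so the even and odd parts of
the exponential series of `sK` are the cosine and sine series of `sω`.
-/

open scoped InnerProductSpace
open Matrix

noncomputable section

/-- The action of a matrix on a vector in `EuclideanSpace ℂ (Fin n)`. -/
def matApp {n : ℕ} (M : Matrix (Fin n) (Fin n) ℂ) (v : EuclideanSpace ℂ (Fin n)) :
    EuclideanSpace ℂ (Fin n) :=
  Matrix.toEuclideanLin M v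

/-- The rank-one outer product `ψψ†`. -/
def outerProd {n : ℕ} (v : EuclideanSpace ℂ (Fin n)) : Matrix (Fin n) (Fin n) ℂ :=
  Matrix.of fun a b => v a * (starRingEnd ℂ) (v b)

/-- Energy mean `E_Ψ = ⟨ψ, Hψ⟩`. -/
def energyMean {n : ℕ} (H : Matrix (Fin n) (Fin n) ℂ) (v : EuclideanSpace ℂ (Fin n)) : ℝ :=
  (⟪v, matApp H v⟫_ℂ).re

/-- Energy variance `V_Ψ = ⟨ψ, H²ψ⟩ − E_Ψ²`. -/
def energyVar {n : ℕ} (H : Matrix (Fin n) (Fin n) ℂ) (v : EuclideanSpace ℂ (Fin n)) : ℝ :=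
  (⟪v, matApp (H * H) v⟫_ℂ).re - (energyMean H v) ^ 2

open scoped Nat

section CubicExponential

variable {𝔸 : Type*} [NormedRing 𝔸] [NormedAlgebra ℝ 𝔸] {M : 𝔸} {ω : ℝ}

theorem pow_two_mul_add_one_of_pow_three (hM : M ^ 3 = -ω ^ 2 • M) (k : ℕ) :
    M ^ (2 * k + 1) = (-ω ^ 2) ^ k • M := by
  induction k with
  | zero => simp
  | succ k ih =>
    rw [show 2 * (k + 1) + 1 = 2 * k + 1 + 2 by ring, pow_add, ih, smul_mul_assoc, ← pow_succ',
      hM, smul_smul, ← pow_succ]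

theorem pow_two_mul_add_two_of_pow_three (hM : M ^ 3 = -ω ^ 2 • M) (k : ℕ) :
    M ^ (2 * k + 2) = (-ω ^ 2) ^ k • M ^ 2 := by
  rw [pow_succ, pow_two_mul_add_one_of_pow_three hM, smul_mul_assoc, ← sq]

theorem hasSum_exp_odd_of_pow_three (hω : ω ≠ 0) (hM : M ^ 3 = -ω ^ 2 • M) (s : ℝ) :
    HasSum (fun k : ℕ => ((2 * k + 1)! : ℝ)⁻¹ • (s • M) ^ (2 * k + 1))
      ((Real.sin (s * ω) / ω) • M) := by
  convert ((Real.hasSum_sin (s * ω)).div_const ω).smul_const M using 2 with k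
  rw [smul_pow, pow_two_mul_add_one_of_pow_three hM, smul_smul, smul_smul]
  congr 1
  field_simp
  ring

theorem hasSum_exp_even_of_pow_three (hω : ω ≠ 0) (hM : M ^ 3 = -ω ^ 2 • M) (s : ℝ) :
    HasSum (fun k : ℕ => ((2 * k)! : ℝ)⁻¹ • (s • M) ^ (2 * k))
      (1 + ((1 - Real.cos (s * ω)) / ω ^ 2) • M ^ 2) := by
  have hcos := (hasSum_nat_add_iff' 1
    (f := fun k : ℕ => (-1) ^ k * (s * ω) ^ (2 * k) / ((2 * k)! : ℝ))).mpr (Real.hasSum_cos (s * ω))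
  have htail : HasSum (fun k : ℕ => ((2 * (k + 1))! : ℝ)⁻¹ • (s • M) ^ (2 * (k + 1)))
      (((1 - Real.cos (s * ω)) / ω ^ 2) • M ^ 2) := by
    convert (hcos.neg.div_const (ω ^ 2)).smul_const (M ^ 2) using 2 with k
    · rw [smul_pow, mul_add, mul_one, pow_two_mul_add_two_of_pow_three hM, smul_smul, smul_smul]
      congr 1
      field_simp
      ring
    · simp
  simpa using HasSum.zero_add (f := fun k : ℕ => ((2 * k)! : ℝ)⁻¹ • (s • M) ^ (2 * k)) htail

theorem exp_smul_of_pow_three (hω : ω ≠ 0) (hM : M ^ 3 = -ω ^ 2 • M)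
    (s : ℝ) :
    NormedSpace.exp (s • M)
      = 1 + (Real.sin (s * ω) / ω) • M + ((1 - Real.cos (s * ω)) / ω ^ 2) • M ^ 2 := by
  rw [NormedSpace.exp_eq_tsum ℝ]
  refine HasSum.tsum_eq ?_
  convert HasSum.even_add_odd (f := fun n : ℕ => (n ! : ℝ)⁻¹ • (s • M) ^ n)
    (hasSum_exp_even_of_pow_three hω hM s) (hasSum_exp_odd_of_pow_three hω hM s) using 1
  abel

end CubicExponential

theorem IsIdempotentElem.commutator_pow_three {R A : Type*} [CommRing R] [Ring A] [Algebra R A]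
    {P H : A} {e w : R} (hP : IsIdempotentElem P) (hPHP : P * H * P = e • P)
    (hPHHP : P * (H * H) * P = w • P) :
    (P * H - H * P) ^ 3 = (e ^ 2 - w) • (P * H - H * P) := by
  have hPP' (X : A) : P * (P * X) = P * X := by rw [← mul_assoc, hP.eq]
  have hPHP' (X : A) : P * (H * (P * X)) = e • (P * X) := by
    rw [← mul_assoc, ← mul_assoc, hPHP, smul_mul_assoc]
  simp only [mul_assoc] at hPHP hPHHP
  -- after right-association every word of length six in `P, H` contains `PP`, `PHP` or `PHHP`
  simp only [pow_succ, pow_zero, one_mul, sub_mul, mul_sub, mul_assoc, hPP', hPHP',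
    mul_smul_comm, smul_mul_assoc, hPHP, hPHHP]
  module

section OuterProduct

variable {n : ℕ}

theorem outerProd_mul_mul_outerProd (A : Matrix (Fin n) (Fin n) ℂ) (ψ : EuclideanSpace ℂ (Fin n)) :
    outerProd ψ * A * outerProd ψ = ⟪ψ, matApp A ψ⟫_ℂ • outerProd ψ := by
  ext a b
  simp only [outerProd, matApp, Matrix.mul_apply, Matrix.of_apply, Matrix.smul_apply,
    PiLp.inner_apply, RCLike.inner_apply, Matrix.toLpLin_apply, smul_eq_mul,
    Matrix.mulVec, dotProduct, Finset.sum_mul]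
  rw [Finset.sum_comm]
  refine Finset.sum_congr rfl fun c _ => Finset.sum_congr rfl fun d _ => ?_
  ring

theorem isIdempotentElem_outerProd {ψ : EuclideanSpace ℂ (Fin n)} (hψ : ‖ψ‖ = 1) :
    IsIdempotentElem (outerProd ψ) := by
  have h := outerProd_mul_mul_outerProd 1 ψ
  rwa [mul_one, show matApp 1 ψ = ψ by simp [matApp], inner_self_eq_norm_sq_to_K, hψ,
    RCLike.ofReal_one, one_pow, one_smul] at h

theorem ofReal_re_inner_matApp_self {A : Matrix (Fin n) (Fin n) ℂ} (hA : A.IsHermitian)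
    (ψ : EuclideanSpace ℂ (Fin n)) :
    ((⟪ψ, matApp A ψ⟫_ℂ).re : ℂ) = ⟪ψ, matApp A ψ⟫_ℂ :=
  (Matrix.isSymmetric_toEuclideanLin_iff.mpr hA).coe_re_inner_self_apply ψ

theorem commutator_outerProd_pow_three {H : Matrix (Fin n) (Fin n) ℂ} (hH : H.IsHermitian)
    {ψ : EuclideanSpace ℂ (Fin n)} (hψ : ‖ψ‖ = 1) :
    (outerProd ψ * H - H * outerProd ψ) ^ 3
      = ((-energyVar H ψ : ℝ) : ℂ) • (outerProd ψ * H - H * outerProd ψ) := by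
  have hHH : (H * H).IsHermitian := by simpa only [sq] using hH.pow 2
  rw [(isIdempotentElem_outerProd hψ).commutator_pow_three (outerProd_mul_mul_outerProd H ψ)
    (outerProd_mul_mul_outerProd (H * H) ψ)]
  congr 1
  simp only [energyVar, energyMean]
  push_cast
  rw [ofReal_re_inner_matApp_self hH, ofReal_re_inner_matApp_self hHH]
  ring

end OuterProduct

theorem exp_commutator_polynomial_general {n : ℕ}
    (H : Matrix (Fin n) (Fin n) ℂ) (hH : H.IsHermitian)
    (ψ : EuclideanSpace ℂ (Fin n)) (hψ : ‖ψ‖ = 1)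
    (hV : 0 < energyVar H ψ) (s : ℝ) :
    NormedSpace.exp ((s : ℂ) • (outerProd ψ * H - H * outerProd ψ))
      = 1
        + ((Real.sin (s * Real.sqrt (energyVar H ψ)) / Real.sqrt (energyVar H ψ) : ℝ) : ℂ)
            • (outerProd ψ * H - H * outerProd ψ)
        + (((1 - Real.cos (s * Real.sqrt (energyVar H ψ))) / energyVar H ψ : ℝ) : ℂ)
            • ((outerProd ψ * H - H * outerProd ψ) * (outerProd ψ * H - H * outerProd ψ)) := by
  -- `NormedSpace.exp` does not depend on the norm; any submultiplicative one will do
  let : NormedRing (Matrix (Fin n) (Fin n) ℂ) := Matrix.linftyOpNormedRing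
  let : NormedAlgebra ℝ (Matrix (Fin n) (Fin n) ℂ) := Matrix.linftyOpNormedAlgebra
  have hsmul (r : ℝ) (K : Matrix (Fin n) (Fin n) ℂ) : (r : ℂ) • K = r • K := by
    ext; simp [Complex.real_smul]
  have hsq : Real.sqrt (energyVar H ψ) ^ 2 = energyVar H ψ := Real.sq_sqrt hV.le
  have hK := commutator_outerProd_pow_three hH hψ
  rw [hsmul, ← hsq] at hK
  simp only [hsmul]
  refine (exp_smul_of_pow_three (Real.sqrt_pos.mpr hV).ne' hK s).trans ?_
  rw [hsq, sq]

/-- for Hermitian `H`, unit `ψ`, `V_Ψ > 0` and any real `s`,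
`exp(s[Ψ,H]) = I + A(s)[Ψ,H] + B(s)[Ψ,H]²` with
`A(s) = sin(s√V)/√V` and `B(s) = (1 − cos(s√V))/V`. -/
theorem exp_commutator_polynomial {n : ℕ} (hn : 1 ≤ n)
    (H : Matrix (Fin n) (Fin n) ℂ) (hH : H.IsHermitian)
    (ψ : EuclideanSpace ℂ (Fin n)) (hψ : ‖ψ‖ = 1)
    (hV : 0 < energyVar H ψ) (s : ℝ) :
    NormedSpace.exp ((s : ℂ) • (outerProd ψ * H - H * outerProd ψ))
      = 1
        + ((Real.sin (s * Real.sqrt (energyVar H ψ)) / Real.sqrt (energyVar H ψ) : ℝ) : ℂ)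
            • (outerProd ψ * H - H * outerProd ψ)
        + (((1 - Real.cos (s * Real.sqrt (energyVar H ψ))) / energyVar H ψ : ℝ) : ℂ)
            • ((outerProd ψ * H - H * outerProd ψ) * (outerProd ψ * H - H * outerProd ψ)) :=
  exp_commutator_polynomial_general H hH ψ hψ hV s
end
end

section
/- Let H be an n×n Hermitian complex matrix, ψ ∈ ℂ^n a unit vector, Ψ = ψψ†, E_Ψ = ⟨ψ, Hψ⟩, and assume V_Ψ = ⟨ψ, H²ψ⟩ − E_Ψ² > 0. Then for every real s, exp(s[Ψ,H]) ψ = (a(s)·I + b(s)·H) ψ, where a(s) = (E_Ψ/√V_Ψ)·sin(s√V_Ψ) + cos(s√V_Ψ) and b(s) = −(1/√V_Ψ)·sin(s√V_Ψ). -/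
/-! The commutator `C = [Ψ, H]` preserves the plane spanned by `ψ` and `Hψ`, where it acts as a
rotation generator: `Cψ = E ψ - Hψ` and `C (Cψ) = -V ψ`. So the exponential series of `sC`
applied to `ψ` splits into even terms, proportional to `ψ`, summing to `cos (s√V) ψ`, and odd terms,
proportional to `Cψ`, summing to `sin (s√V) / √V · Cψ`. -/

open scoped InnerProductSpace
open Matrix

noncomputable section

open NormedSpace
open scoped Nat

theorem Matrix.toEuclideanCLM_exp {𝕜 ι : Type*} [RCLike 𝕜] [Fintype ι] [DecidableEq ι]
    (A : Matrix ι ι 𝕜) : toEuclideanCLM (𝕜 := 𝕜) (exp A) = exp (toEuclideanCLM (𝕜 := 𝕜) A) := by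
  have hcont : Continuous (toEuclideanCLM (n := ι) (𝕜 := 𝕜)) :=
    LinearMap.continuous_of_finiteDimensional
      (toEuclideanCLM (n := ι) (𝕜 := 𝕜)).toAlgEquiv.toLinearMap
  -- `exp` does not depend on the norm, so any algebra norm on matrices serves for `map_exp`.
  open scoped Norms.Operator in
  exact map_exp _ hcont A

namespace ContinuousLinearMap

variable {R M : Type*} [Semiring R] [AddCommMonoid M] [Module R M] [TopologicalSpace M]
  {T : M →L[R] M} {v : M} {c : R}

theorem pow_even_apply_of_apply_apply_eq_smul (hT : T (T v) = c • v) (m : ℕ) :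
    (T ^ (2 * m)) v = c ^ m • v := by
  induction m with
  | zero => simp
  | succ m ih =>
    rw [mul_add, pow_add, mul_apply_eq_comp, sq, mul_apply_eq_comp, hT, map_smul, ih, smul_smul,
      _root_.pow_succ']

theorem pow_odd_apply_of_apply_apply_eq_smul (hT : T (T v) = c • v) (m : ℕ) :
    (T ^ (2 * m + 1)) v = c ^ m • T v := by
  rw [_root_.pow_succ', mul_apply_eq_comp, pow_even_apply_of_apply_apply_eq_smul hT, map_smul]

end ContinuousLinearMap

section ExpRotation

variable {E : Type*} [NormedAddCommGroup E] [NormedSpace ℂ E] [CompleteSpace E]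

theorem exp_smul_apply_eq_cos_add_sin {T : E →L[ℂ] E} {v : E} {ω : ℂ} (hω : ω ≠ 0)
    (hT : T (T v) = -ω ^ 2 • v) (s : ℂ) :
    exp (s • T) v = Complex.cos (s * ω) • v + (Complex.sin (s * ω) / ω) • T v := by
  have hexp : HasSum (fun k => (s ^ k * (k ! : ℂ)⁻¹) • (T ^ k) v) (exp (s • T) v) := by
    have h := (exp_series_hasSum_exp' (𝕂 := ℂ) (s • T)).mapL (ContinuousLinearMap.apply ℂ E v)
    simpa only [ContinuousLinearMap.apply_apply, smul_pow, _root_.smul_apply,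
      smul_smul, mul_comm] using h
  have heven : HasSum (fun m => (s ^ (2 * m) * ((2 * m) ! : ℂ)⁻¹) • (T ^ (2 * m)) v)
      (Complex.cos (s * ω) • v) := by
    convert (Complex.hasSum_cos (s * ω)).smul_const v using 2 with m
    rw [T.pow_even_apply_of_apply_apply_eq_smul hT, smul_smul]
    congr 1
    ring
  have hodd : HasSum (fun m => (s ^ (2 * m + 1) * ((2 * m + 1) ! : ℂ)⁻¹) • (T ^ (2 * m + 1)) v)
      ((Complex.sin (s * ω) / ω) • T v) := by
    convert ((Complex.hasSum_sin (s * ω)).div_const ω).smul_const (T v) using 2 with m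
    rw [T.pow_odd_apply_of_apply_apply_eq_smul hT, smul_smul]
    congr 1
    field_simp
    ring
  exact hexp.unique <|
    heven.even_add_odd (f := fun k => (s ^ k * (k ! : ℂ)⁻¹) • (T ^ k) v) hodd

end ExpRotation

open InnerProductSpace

section Commutator

variable {𝕜 E : Type*} [RCLike 𝕜] [NormedAddCommGroup E] [InnerProductSpace 𝕜 E]
  (T : E →L[𝕜] E) {ψ : E}

theorem rankOne_mul_sub_mul_rankOne_apply (v : E) :
    (rankOne 𝕜 ψ ψ * T - T * rankOne 𝕜 ψ ψ) v = ⟪ψ, T v⟫_𝕜 • ψ - ⟪ψ, v⟫_𝕜 • T ψ := by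
  simp

theorem rankOne_mul_sub_mul_rankOne_apply_self (hψ : ‖ψ‖ = 1) :
    (rankOne 𝕜 ψ ψ * T - T * rankOne 𝕜 ψ ψ) ψ = ⟪ψ, T ψ⟫_𝕜 • ψ - T ψ := by
  rw [rankOne_mul_sub_mul_rankOne_apply, inner_self_eq_one_of_norm_eq_one hψ, one_smul]

theorem rankOne_mul_sub_mul_rankOne_apply_apply_self (hψ : ‖ψ‖ = 1) :
    (rankOne 𝕜 ψ ψ * T - T * rankOne 𝕜 ψ ψ) ((rankOne 𝕜 ψ ψ * T - T * rankOne 𝕜 ψ ψ) ψ)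
      = (⟪ψ, T ψ⟫_𝕜 ^ 2 - ⟪ψ, T (T ψ)⟫_𝕜) • ψ := by
  rw [rankOne_mul_sub_mul_rankOne_apply_self T hψ, map_sub, map_smul,
    rankOne_mul_sub_mul_rankOne_apply_self T hψ, rankOne_mul_sub_mul_rankOne_apply]
  module

end Commutator

section Matrix

variable {n : ℕ}

theorem matApp_eq_toEuclideanCLM (M : Matrix (Fin n) (Fin n) ℂ) (v : EuclideanSpace ℂ (Fin n)) :
    matApp M v = toEuclideanCLM (𝕜 := ℂ) M v :=
  rfl

theorem toEuclideanCLM_outerProd (ψ : EuclideanSpace ℂ (Fin n)) :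
    toEuclideanCLM (𝕜 := ℂ) (outerProd ψ) = rankOne ℂ ψ ψ := by
  ext v a
  simp [outerProd, Matrix.mulVec, dotProduct, PiLp.inner_apply, Finset.mul_sum, mul_comm,
    mul_left_comm]

theorem ofReal_energyMean {H : Matrix (Fin n) (Fin n) ℂ} (hH : H.IsHermitian)
    (ψ : EuclideanSpace ℂ (Fin n)) : (energyMean H ψ : ℂ) = ⟪ψ, matApp H ψ⟫_ℂ :=
  (isSymmetric_toEuclideanLin_iff.mpr hH).coe_re_inner_self_apply ψ

theorem ofReal_energyVar {H : Matrix (Fin n) (Fin n) ℂ} (hH : H.IsHermitian)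
    (ψ : EuclideanSpace ℂ (Fin n)) :
    (energyVar H ψ : ℂ) = ⟪ψ, matApp (H * H) ψ⟫_ℂ - ⟪ψ, matApp H ψ⟫_ℂ ^ 2 := by
  have hHH : (H * H).IsHermitian := by simpa [sq] using hH.pow 2
  rw [energyVar, Complex.ofReal_sub, Complex.ofReal_pow, ofReal_energyMean hH]
  congr 1
  exact (isSymmetric_toEuclideanLin_iff.mpr hHH).coe_re_inner_self_apply ψ

end Matrix

theorem exp_commutator_apply_state_general {n : ℕ}
    (H : Matrix (Fin n) (Fin n) ℂ) (hH : H.IsHermitian)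
    (ψ : EuclideanSpace ℂ (Fin n)) (hψ : ‖ψ‖ = 1)
    (hV : 0 < energyVar H ψ) (s : ℝ) :
    matApp (NormedSpace.exp ((s : ℂ) • (outerProd ψ * H - H * outerProd ψ))) ψ
      = matApp
          ((((energyMean H ψ / Real.sqrt (energyVar H ψ))
                * Real.sin (s * Real.sqrt (energyVar H ψ))
              + Real.cos (s * Real.sqrt (energyVar H ψ)) : ℝ) : ℂ) • 1
            + ((-(1 / Real.sqrt (energyVar H ψ))
                * Real.sin (s * Real.sqrt (energyVar H ψ)) : ℝ) : ℂ) • H) ψ := by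
  set C := rankOne ℂ ψ ψ * toEuclideanCLM (𝕜 := ℂ) H - toEuclideanCLM (𝕜 := ℂ) H * rankOne ℂ ψ ψ
  have hC : toEuclideanCLM (𝕜 := ℂ) (outerProd ψ * H - H * outerProd ψ) = C := by
    rw [map_sub, map_mul, map_mul, toEuclideanCLM_outerProd]
  set ω : ℂ := (Real.sqrt (energyVar H ψ) : ℂ)
  have hω : ω ≠ 0 := Complex.ofReal_ne_zero.mpr (Real.sqrt_pos.mpr hV).ne'
  have hC2 : C (C ψ) = -ω ^ 2 • ψ := by
    rw [rankOne_mul_sub_mul_rankOne_apply_apply_self _ hψ, ← Complex.ofReal_pow,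
      Real.sq_sqrt hV.le, ofReal_energyVar hH, matApp_eq_toEuclideanCLM, matApp_eq_toEuclideanCLM,
      map_mul, mul_apply_eq_comp]
    congr 1
    ring
  calc matApp (NormedSpace.exp ((s : ℂ) • (outerProd ψ * H - H * outerProd ψ))) ψ
      = NormedSpace.exp ((s : ℂ) • C) ψ := by
        rw [matApp_eq_toEuclideanCLM, toEuclideanCLM_exp, map_smul, hC]
    _ = Complex.cos (s * ω) • ψ + (Complex.sin (s * ω) / ω) • C ψ :=
        exp_smul_apply_eq_cos_add_sin hω hC2 s
    _ = _ := by
        rw [rankOne_mul_sub_mul_rankOne_apply_self _ hψ, ← matApp_eq_toEuclideanCLM,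
          ← ofReal_energyMean hH]
        simp only [matApp_eq_toEuclideanCLM, map_add, map_smul, map_one, _root_.add_apply,
          _root_.smul_apply, one_apply_eq_self]
        push_cast
        module

/-- for Hermitian `H`, unit `ψ`, `V_Ψ > 0` and any real `s`,
`exp(s[Ψ,H]) ψ = (a(s)·I + b(s)·H) ψ`, where
`a(s) = (E/√V)·sin(s√V) + cos(s√V)` and `b(s) = −(1/√V)·sin(s√V)`. -/
theorem exp_commutator_apply_state {n : ℕ} (hn : 1 ≤ n)
    (H : Matrix (Fin n) (Fin n) ℂ) (hH : H.IsHermitian)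
    (ψ : EuclideanSpace ℂ (Fin n)) (hψ : ‖ψ‖ = 1)
    (hV : 0 < energyVar H ψ) (s : ℝ) :
    matApp (NormedSpace.exp ((s : ℂ) • (outerProd ψ * H - H * outerProd ψ))) ψ
      = matApp
          ((((energyMean H ψ / Real.sqrt (energyVar H ψ))
                * Real.sin (s * Real.sqrt (energyVar H ψ))
              + Real.cos (s * Real.sqrt (energyVar H ψ)) : ℝ) : ℂ) • 1
            + ((-(1 / Real.sqrt (energyVar H ψ))
                * Real.sin (s * Real.sqrt (energyVar H ψ)) : ℝ) : ℂ) • H) ψ :=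
  exp_commutator_apply_state_general H hH ψ hψ hV s
end
end
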